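/- Let $y_0 \in (0,1)$ and let $\tilde\rho: (0,\infty) \to [0,\infty)$ be measurable with $\tilde\rho(y) = 0$ for $y < y_0$ and $\tilde\rho(y) \le \frac{C}{\sqrt{y - y_0}}$ for $y > y_0$. Then $\tilde\rho \in L^p_{loc}(0,\infty)$ for every $1 \le p < 2$, and the function $\Lambda(y) = -\frac12\log\left(1 - \frac{8\pi}{y}\int_{y_0}^{y}\xi^2\tilde\rho(\xi)\,d\xi\right)$, where the argument of the logarithm is assumed to stay in a compact subset of $(0,\infty)$ on each compact subset of $(0,\infty)$, belongs to $W^{1,p}_{loc}(0,\infty)$ for every $1 \le p < 2$. -/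

import Mathlib

/-!
Near `y0` the density is dominated by `C |y - y0|^(-1/2)`, so `‖ρ̃‖^p` is dominated by
`C^p |y - y0|^(-p/2)`, which is locally integrable exactly when `p < 2`. The enclosed mass
`F y = ∫_{y0}^y ξ² ρ̃` is the primitive of a locally integrable function, hence continuous
and, by Lebesgue's differentiation theorem, differentiable a.e. with `F' = y² ρ̃`. On `(a, b)`
with `a > 0` the argument `A = 1 - 8π F / y` of the logarithm lies in `[c, d] ⊂ (0, ∞)`, so
`Λ` is bounded, and a.e. `Λ' = 4π (y ρ̃ - F / y²) / A` is bounded by a constant plus a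
multiple of `‖ρ̃‖`, which is in `L^p`.
-/

open MeasureTheory Set Real

section

variable {E : Type*} [NormedAddCommGroup E]

theorem locallyIntegrable_of_norm_le_rpow_abs_sub {f : ℝ → E} {y0 K r : ℝ} (hr : -1 < r)
    (hf : AEStronglyMeasurable f volume) (h : ∀ᵐ y, ‖f y‖ ≤ K * |y - y0| ^ r) :
    LocallyIntegrable f volume := by
  let e := Homeomorph.addRight y0
  have hmap : Measure.map e volume = volume := map_add_right_eq_self volume y0
  rw [← hmap, locallyIntegrable_map_homeomorph]
  have hpres : MeasurePreserving e volume volume := measurePreserving_add_right volume y0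
  refine locallyIntegrable_of_norm_le_rpow (C := K) (α := -r) (by simp) (by simp; linarith)
    ?_ ?_
  · filter_upwards [hpres.quasiMeasurePreserving.ae h] with x hx
    simpa [e] using hx
  · exact hf.comp_measurePreserving hpres

theorem memLp_restrict_of_norm_le_rpow_abs_sub {f : ℝ → E} {y0 K r : ℝ} {p : ENNReal}
    (hp0 : p ≠ 0) (hp : p ≠ ⊤) (hrp : -1 < r * p.toReal) (hK : 0 ≤ K)
    (hf : AEStronglyMeasurable f volume) (h : ∀ᵐ y, ‖f y‖ ≤ K * |y - y0| ^ r)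
    {s : Set ℝ} (hs : IsCompact s) : MemLp f p (volume.restrict s) := by
  have hq : 0 ≤ p.toReal := ENNReal.toReal_nonneg
  have hloc : LocallyIntegrable (fun y => ‖f y‖ ^ p.toReal) volume := by
    refine locallyIntegrable_of_norm_le_rpow_abs_sub (y0 := y0) (K := K ^ p.toReal) hrp
      (hf.norm.aemeasurable.pow_const _).aestronglyMeasurable ?_
    filter_upwards [h] with y hy
    rw [norm_of_nonneg (by positivity), rpow_mul (abs_nonneg _),
      ← mul_rpow hK (by positivity)]
    exact rpow_le_rpow (norm_nonneg _) hy hq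
  rw [← memLp_norm_rpow_iff hf.restrict hp0 hp, ENNReal.div_self hp0 hp,
    memLp_one_iff_integrable]
  exact hloc.integrableOn_isCompact hs

theorem ae_norm_le_rpow_abs_sub_of_le_div_sqrt {ρ : ℝ → ℝ} {y0 C : ℝ} (hnn : ∀ y, 0 ≤ ρ y)
    (hzero : ∀ y < y0, ρ y = 0) (hbd : ∀ y > y0, ρ y ≤ C / √(y - y0)) (hC : 0 ≤ C) :
    ∀ᵐ y, ‖ρ y‖ ≤ C * |y - y0| ^ (-(1 / 2) : ℝ) := by
  filter_upwards [Measure.ae_ne volume y0] with y hy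
  rw [norm_of_nonneg (hnn y)]
  rcases hy.lt_or_gt with hlt | hgt
  · rw [hzero y hlt]
    positivity
  · have hpos : 0 < y - y0 := sub_pos.2 hgt
    rw [abs_of_pos hpos, rpow_neg hpos.le, ← sqrt_eq_rpow, ← div_eq_mul_inv]
    exact hbd y hgt

theorem MeasureTheory.LocallyIntegrable.continuous_primitive {g : ℝ → E} [NormedSpace ℝ E]
    (hg : LocallyIntegrable g volume) (a : ℝ) : Continuous fun y => ∫ ξ in a..y, g ξ :=
  intervalIntegral.continuous_primitive (fun _ _ => intervalIntegrable_iff.2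
    ((hg.integrableOn_isCompact isCompact_uIcc).mono_set uIoc_subset_uIcc)) a

theorem setIntegral_Ioc_eq_intervalIntegral_of_eq_zero {g : ℝ → E} [NormedSpace ℝ E] {y0 : ℝ}
    (hg : ∀ y < y0, g y = 0) (y : ℝ) : ∫ ξ in Ioc y0 y, g ξ = ∫ ξ in y0..y, g ξ := by
  rcases le_or_gt y0 y with hle | hlt
  · rw [intervalIntegral.integral_of_le hle]
  · rw [Ioc_eq_empty hlt.not_gt, Measure.restrict_empty, integral_zero_measure,
      intervalIntegral.integral_of_ge hlt.le, integral_Ioc_eq_integral_Ioo,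
      setIntegral_eq_zero_of_forall_eq_zero fun ξ hξ => hg ξ hξ.2, neg_zero]

end

/-- `Λ` expressed through the enclosed mass `F y = ∫_{y0}^y ξ² ρ̃(ξ) dξ`. -/
noncomputable def metricCoeff (F : ℝ → ℝ) (y : ℝ) : ℝ := -(1 / 2) * log (1 - 8 * π / y * F y)

theorem hasDerivAt_metricCoeff {F : ℝ → ℝ} {x m : ℝ} (hx : x ≠ 0) (hF : HasDerivAt F m x)
    (hA : 1 - 8 * π / x * F x ≠ 0) :
    HasDerivAt (metricCoeff F) (4 * π * (m / x - F x / x ^ 2) / (1 - 8 * π / x * F x)) x := by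
  have h := (((((hasDerivAt_const x (8 * π)).div (hasDerivAt_id x) hx).mul hF).const_sub 1).log
    hA).const_mul (-(1 / 2))
  refine h.congr_deriv ?_
  simp only [id, Pi.div_apply, Pi.mul_apply]
  field_simp
  ring

theorem memLp_of_eqOn_metricCoeff {F Λ : ℝ → ℝ} {a b c d : ℝ} {p : ENNReal} (ha : 0 < a)
    (hc : 0 < c) (hF : Continuous F) (hΛ : EqOn Λ (metricCoeff F) (Ioi 0))
    (hcd : ∀ y ∈ Ioo a b, c ≤ 1 - 8 * π / y * F y ∧ 1 - 8 * π / y * F y ≤ d) :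
    MemLp Λ p (volume.restrict (Ioo a b)) := by
  have hΛae : Λ =ᵐ[volume.restrict (Ioo a b)] metricCoeff F := by
    filter_upwards [ae_restrict_mem measurableSet_Ioo] with y hy using hΛ (ha.trans hy.1)
  have hmeas : Measurable (metricCoeff F) := by
    unfold metricCoeff
    fun_prop
  refine (memLp_congr_ae hΛae).2
    (.of_bound hmeas.aestronglyMeasurable (1 / 2 * max |log c| |log d|) ?_)
  filter_upwards [ae_restrict_mem measurableSet_Ioo] with y hy
  obtain ⟨hcy, hyd⟩ := hcd y hy
  have hlog := abs_le_max_abs_abs (log_le_log hc hcy) (log_le_log (hc.trans_le hcy) hyd)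
  rw [metricCoeff, norm_mul, norm_neg, norm_of_nonneg (by norm_num : (0 : ℝ) ≤ 1 / 2),
    norm_eq_abs]
  gcongr

theorem memLp_deriv_of_eqOn_metricCoeff {F ρ Λ : ℝ → ℝ} {a b c : ℝ} {p : ENNReal} (ha : 0 < a)
    (hc : 0 < c) (hF : Continuous F) (hF' : ∀ᵐ x, HasDerivAt F (x ^ 2 * ρ x) x)
    (hρ : MemLp ρ p (volume.restrict (Ioo a b))) (hΛ : EqOn Λ (metricCoeff F) (Ioi 0))
    (hcA : ∀ y ∈ Ioo a b, c ≤ 1 - 8 * π / y * F y) :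
    MemLp (deriv Λ) p (volume.restrict (Ioo a b)) := by
  obtain ⟨M, hM⟩ := isCompact_Icc.exists_bound_of_continuousOn (s := Icc a b) hF.continuousOn
  have hdom :
      MemLp (fun x => 4 * π / c * (b * ‖ρ x‖ + M / a ^ 2)) p (volume.restrict (Ioo a b)) :=
    ((hρ.norm.const_mul b).add (memLp_const _)).const_mul _
  refine hdom.of_le (measurable_deriv Λ).aestronglyMeasurable.restrict ?_
  filter_upwards [ae_restrict_mem measurableSet_Ioo, ae_restrict_of_ae hF'] with x hx hFd
  have hx0 : 0 < x := ha.trans hx.1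
  have hcx := hcA x hx
  have hΛx : Λ =ᶠ[nhds x] metricCoeff F := by
    filter_upwards [Ioi_mem_nhds hx0] with y hy using hΛ hy
  rw [((hasDerivAt_metricCoeff hx0.ne' hFd (hc.trans_le hcx).ne').congr_of_eventuallyEq
    hΛx).deriv]
  have hFM : ‖F x‖ ≤ M := hM x (Ioo_subset_Icc_self hx)
  have hxρ : x ^ 2 * ρ x / x = x * ρ x := by field_simp
  calc ‖4 * π * (x ^ 2 * ρ x / x - F x / x ^ 2) / (1 - 8 * π / x * F x)‖
      ≤ 4 * π * (x * ‖ρ x‖ + ‖F x‖ / x ^ 2) / c := by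
        rw [norm_div, norm_mul, hxρ, norm_of_nonneg (by positivity : 0 ≤ 4 * π),
          norm_of_nonneg (hc.le.trans hcx)]
        gcongr
        refine (norm_sub_le _ _).trans_eq ?_
        rw [norm_mul, norm_div, norm_of_nonneg hx0.le,
          norm_of_nonneg (by positivity : 0 ≤ x ^ 2)]
    _ ≤ 4 * π / c * (b * ‖ρ x‖ + M / a ^ 2) := by
        rw [mul_div_right_comm]
        have hM0 : 0 ≤ M := (norm_nonneg _).trans hFM
        gcongr
        exacts [hx.2.le, hx.1.le]
    _ ≤ ‖4 * π / c * (b * ‖ρ x‖ + M / a ^ 2)‖ := le_norm_self _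

theorem stmt_19 (y0 C : ℝ) (hC : 0 ≤ C)
    (ρ : ℝ → ℝ) (hmeas : Measurable ρ) (hnn : ∀ y, 0 ≤ ρ y)
    (hzero : ∀ y < y0, ρ y = 0)
    (hbd : ∀ y > y0, ρ y ≤ C / Real.sqrt (y - y0))
    (Λ : ℝ → ℝ)
    (hΛ : ∀ y : ℝ, 0 < y → Λ y
      = -(1/2) * Real.log (1 - 8 * Real.pi / y * ∫ ξ in Set.Ioc y0 y, ξ^2 * ρ ξ))
    (harg : ∀ a b : ℝ, 0 < a → a ≤ b → ∃ c d : ℝ, 0 < c ∧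
      ∀ y ∈ Set.Icc a b,
        c ≤ 1 - 8 * Real.pi / y * ∫ ξ in Set.Ioc y0 y, ξ^2 * ρ ξ ∧
        1 - 8 * Real.pi / y * ∫ ξ in Set.Ioc y0 y, ξ^2 * ρ ξ ≤ d) :
    ∀ p : ENNReal, 1 ≤ p → p < 2 →
      (∀ a b : ℝ, 0 < a →
        MemLp ρ p (volume.restrict (Set.Ioo a b))) ∧
      (∀ a b : ℝ, 0 < a →
        MemLp Λ p (volume.restrict (Set.Ioo a b)) ∧
        MemLp (deriv Λ) p (volume.restrict (Set.Ioo a b))) := by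
  intro p hp1 hp2
  have hp0 : p ≠ 0 := (one_pos.trans_le hp1).ne'
  have hptop : p ≠ ⊤ := hp2.ne_top
  have hq : p.toReal < 2 := by
    simpa using (ENNReal.toReal_lt_toReal hptop (by norm_num)).2 hp2
  have hρ_le := ae_norm_le_rpow_abs_sub_of_le_div_sqrt hnn hzero hbd hC
  have hρ : ∀ a b : ℝ, MemLp ρ p (volume.restrict (Ioo a b)) := fun a b =>
    (memLp_restrict_of_norm_le_rpow_abs_sub hp0 hptop (by linarith) hC
      hmeas.aestronglyMeasurable hρ_le isCompact_Icc).mono_measure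
      (Measure.restrict_mono Ioo_subset_Icc_self le_rfl)
  refine ⟨fun a b _ => hρ a b, fun a b ha => ?_⟩
  have hg : LocallyIntegrable (fun ξ => ξ ^ 2 * ρ ξ) volume :=
    (locallyIntegrable_of_norm_le_rpow_abs_sub (by norm_num) hmeas.aestronglyMeasurable
      hρ_le).continuous_mul (continuous_pow 2)
  let F : ℝ → ℝ := fun y => ∫ ξ in y0..y, ξ ^ 2 * ρ ξ
  have hF : Continuous F := hg.continuous_primitive y0
  have hF' : ∀ᵐ x, HasDerivAt F (x ^ 2 * ρ x) x := by
    filter_upwards [LocallyIntegrable.ae_hasDerivAt_integral hg] with x hx using hx y0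
  have hmass : ∀ y, ∫ ξ in Ioc y0 y, ξ ^ 2 * ρ ξ = F y :=
    setIntegral_Ioc_eq_intervalIntegral_of_eq_zero fun y hy => by rw [hzero y hy, mul_zero]
  simp only [hmass] at hΛ harg
  obtain ⟨c, d, hc, hcd⟩ := harg a (max a b) ha (le_max_left a b)
  have hcd' : ∀ y ∈ Ioo a b, c ≤ 1 - 8 * π / y * F y ∧ 1 - 8 * π / y * F y ≤ d :=
    fun y hy => hcd y ⟨hy.1.le, hy.2.le.trans (le_max_right a b)⟩
  exact ⟨memLp_of_eqOn_metricCoeff ha hc hF hΛ hcd',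
    memLp_deriv_of_eqOn_metricCoeff ha hc hF hF' (hρ a b) hΛ fun y hy => (hcd' y hy).1⟩
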